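/- Let X be a metric space with a consistent convex geodesic bicombing σ, and let A, B be nonempty closed bounded σ-convex subsets of X. Then the map γ(t) = cco(⋃_{a∈A} ⋃_{b∈B} {σ(a,b,t)}) satisfies d_H(γ(s), γ(t)) = |t−s|·d_H(A,B) for all s,t ∈ [0,1], with γ(0) = A and γ(1) = B; i.e., γ is a linearly reparametrized geodesic in the hyperspace of nonempty closed bounded convex sets with the Hausdorff metric. -/
import Mathlib


/-- A set is σ-convex if it is closed under the bicombing σ for t ∈ [0,1]. -/
def SigmaConvex {X : Type*} [MetricSpace X] (σ : X → X → ℝ → X) (C : Set X) : Prop :=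
  ∀ x ∈ C, ∀ y ∈ C, ∀ t ∈ Set.Icc (0:ℝ) 1, σ x y t ∈ C

/-- Closed σ-convex hull. -/
def cco {X : Type*} [MetricSpace X] (σ : X → X → ℝ → X) (A : Set X) : Set X :=
  ⋂₀ {C : Set X | IsClosed C ∧ SigmaConvex σ C ∧ A ⊆ C}

open Metric

section aux
variable {X : Type*} [MetricSpace X] (σ : X → X → ℝ → X)

lemma cco_isClosed (S : Set X) : IsClosed (cco σ S) :=
  isClosed_sInter fun _ hC => hC.1

lemma cco_sigmaConvex (S : Set X) : SigmaConvex σ (cco σ S) := by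
  intro x hx y hy t ht
  exact Set.mem_sInter.2 fun C hC =>
    hC.2.1 x (Set.mem_sInter.1 hx C hC) y (Set.mem_sInter.1 hy C hC) t ht

lemma subset_cco (S : Set X) : S ⊆ cco σ S :=
  Set.subset_sInter fun _ hC => hC.2.2

lemma cco_subset {S C : Set X} (h1 : IsClosed C) (h2 : SigmaConvex σ C) (h3 : S ⊆ C) :
    cco σ S ⊆ C :=
  Set.sInter_subset_of_mem ⟨h1, h2, h3⟩

lemma cco_eq_self {S : Set X} (h1 : IsClosed S) (h2 : SigmaConvex σ S) : cco σ S = S :=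
  le_antisymm (cco_subset σ h1 h2 subset_rfl) (subset_cco σ S)

lemma dist_sigma_le
    (h0 : ∀ x y, σ x y 0 = x) (h1 : ∀ x y, σ x y 1 = y)
    (hconvex : ∀ a b c d : X,
      ConvexOn ℝ (Set.Icc (0:ℝ) 1) (fun t => dist (σ a b t) (σ c d t)))
    (a b c e : X) {u : ℝ} (hu : u ∈ Set.Icc (0:ℝ) 1) :
    dist (σ a b u) (σ c e u) ≤ (1 - u) * dist a c + u * dist b e := by
  have h := (hconvex a b c e).2 (Set.left_mem_Icc.2 zero_le_one)
    (Set.right_mem_Icc.2 zero_le_one) (by linarith [hu.2] : (0:ℝ) ≤ 1 - u) hu.1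
    (by ring)
  simpa [h0, h1, smul_eq_mul] using h

/-- The closed r-neighborhood of a nonempty σ-convex set is σ-convex. -/
lemma nbhd_sigmaConvex
    (h0 : ∀ x y, σ x y 0 = x) (h1 : ∀ x y, σ x y 1 = y)
    (hconvex : ∀ a b c d : X,
      ConvexOn ℝ (Set.Icc (0:ℝ) 1) (fun t => dist (σ a b t) (σ c d t)))
    {S : Set X} (hSne : S.Nonempty) (hScv : SigmaConvex σ S) (r : ℝ) :
    SigmaConvex σ {x | Metric.infDist x S ≤ r} := by
  intro x hx y hy u hu
  simp only [Set.mem_setOf_eq] at hx hy ⊢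
  refine le_of_forall_pos_le_add fun ε hε => ?_
  obtain ⟨p, hp, hxp⟩ := (Metric.infDist_lt_iff hSne).1
    (lt_of_le_of_lt hx (by linarith : r < r + ε))
  obtain ⟨q, hq, hyq⟩ := (Metric.infDist_lt_iff hSne).1
    (lt_of_le_of_lt hy (by linarith : r < r + ε))
  have hmem : σ p q u ∈ S := hScv p hp q hq u hu
  have h2 := dist_sigma_le σ h0 h1 hconvex x y p q hu
  have h3 : (1 - u) * dist x p + u * dist y q ≤ r + ε := by
    have h4 : (1 - u) * dist x p ≤ (1 - u) * (r + ε) :=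
      mul_le_mul_of_nonneg_left hxp.le (by linarith [hu.2])
    have h5 : u * dist y q ≤ u * (r + ε) := mul_le_mul_of_nonneg_left hyq.le hu.1
    nlinarith
  exact le_trans (le_trans (Metric.infDist_le_dist_of_mem hmem) h2) h3

lemma nbhd_isClosed (S : Set X) (r : ℝ) : IsClosed {x | Metric.infDist x S ≤ r} :=
  isClosed_le (Metric.continuous_infDist_pt S) continuous_const

end aux

/-- γ(t) = cco(⋃_{a∈A} ⋃_{b∈B} σ(a,b,t)) is a linearly
reparametrized geodesic from A to B in the Hausdorff metric. -/
theorem cco_union_is_geodesic {X : Type*} [MetricSpace X]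
    (σ : X → X → ℝ → X)
    (h0 : ∀ x y, σ x y 0 = x) (h1 : ∀ x y, σ x y 1 = y)
    (hgeo : ∀ x y, ∀ s ∈ Set.Icc (0:ℝ) 1, ∀ t ∈ Set.Icc (0:ℝ) 1,
      dist (σ x y s) (σ x y t) = |t - s| * dist x y)
    (hconvex : ∀ a b c d : X,
      ConvexOn ℝ (Set.Icc (0:ℝ) 1) (fun t => dist (σ a b t) (σ c d t)))
    (hconsistent : ∀ x y : X, ∀ r ∈ Set.Icc (0:ℝ) 1, ∀ s ∈ Set.Icc (0:ℝ) 1,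
      ∀ t ∈ Set.Icc (0:ℝ) 1, r < s →
      σ (σ x y r) (σ x y s) t = σ x y ((1 - t) * r + t * s))
    (A B : Set X)
    (hAne : A.Nonempty) (hAcl : IsClosed A) (hAbd : Bornology.IsBounded A)
    (hAcv : SigmaConvex σ A)
    (hBne : B.Nonempty) (hBcl : IsClosed B) (hBbd : Bornology.IsBounded B)
    (hBcv : SigmaConvex σ B)
    (γ : ℝ → Set X)
    (hγ : γ = fun t => cco σ (⋃ a ∈ A, ⋃ b ∈ B, {σ a b t})) :
    γ 0 = A ∧ γ 1 = B ∧
      ∀ s ∈ Set.Icc (0:ℝ) 1, ∀ t ∈ Set.Icc (0:ℝ) 1,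
        Metric.hausdorffDist (γ s) (γ t) = |t - s| * Metric.hausdorffDist A B := by
  have hγ' : ∀ t, γ t = cco σ (⋃ a ∈ A, ⋃ b ∈ B, {σ a b t}) := by
    intro t; rw [hγ]
  set d := Metric.hausdorffDist A B with hd
  have hd0 : 0 ≤ d := Metric.hausdorffDist_nonneg
  have hfinAB : EMetric.hausdorffEdist A B ≠ ⊤ :=
    hausdorffEdist_ne_top_of_nonempty_of_bounded hAne hBne hAbd hBbd
  have hfinBA : EMetric.hausdorffEdist B A ≠ ⊤ :=
    hausdorffEdist_ne_top_of_nonempty_of_bounded hBne hAne hBbd hAbd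
  have h0mem : (0:ℝ) ∈ Set.Icc (0:ℝ) 1 := ⟨le_refl 0, zero_le_one⟩
  have h1mem : (1:ℝ) ∈ Set.Icc (0:ℝ) 1 := ⟨zero_le_one, le_refl 1⟩
  -- membership of the basic points
  have hmemγ : ∀ t, ∀ a ∈ A, ∀ b ∈ B, σ a b t ∈ γ t := by
    intro t a ha b hb
    rw [hγ']
    refine subset_cco σ _ ?_
    simp only [Set.mem_iUnion, Set.mem_singleton_iff]
    exact ⟨a, ha, b, hb, rfl⟩
  have hγne : ∀ t, (γ t).Nonempty := fun t =>
    ⟨σ hAne.some hBne.some t, hmemγ t _ hAne.some_mem _ hBne.some_mem⟩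
  have hγcl : ∀ t, IsClosed (γ t) := fun t => hγ' t ▸ cco_isClosed σ _
  have hγcv : ∀ t, SigmaConvex σ (γ t) := fun t => hγ' t ▸ cco_sigmaConvex σ _
  have hγmin : ∀ t (C : Set X), IsClosed C → SigmaConvex σ C →
      (∀ a ∈ A, ∀ b ∈ B, σ a b t ∈ C) → γ t ⊆ C := by
    intro t C hc hcv hsub
    rw [hγ']
    refine cco_subset σ hc hcv ?_
    intro x hx
    simp only [Set.mem_iUnion, Set.mem_singleton_iff] at hx
    obtain ⟨a, ha, b, hb, rfl⟩ := hx
    exact hsub a ha b hb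
  -- endpoints
  have hγ0 : γ 0 = A := by
    rw [hγ']
    have hU : (⋃ a ∈ A, ⋃ b ∈ B, {σ a b 0}) = A := by
      ext x
      simp only [Set.mem_iUnion, Set.mem_singleton_iff, h0]
      constructor
      · rintro ⟨a, ha, b, hb, rfl⟩; exact ha
      · intro hx; exact ⟨x, hx, hBne.some, hBne.some_mem, rfl⟩
    rw [hU, cco_eq_self σ hAcl hAcv]
  have hγ1 : γ 1 = B := by
    rw [hγ']
    have hU : (⋃ a ∈ A, ⋃ b ∈ B, {σ a b 1}) = B := by
      ext x
      simp only [Set.mem_iUnion, Set.mem_singleton_iff, h1]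
      constructor
      · rintro ⟨a, ha, b, hb, rfl⟩; exact hb
      · intro hx; exact ⟨hAne.some, hAne.some_mem, x, hx, rfl⟩
    rw [hU, cco_eq_self σ hBcl hBcv]
  -- geodesic distance computations
  have hdist0 : ∀ x y : X, ∀ t ∈ Set.Icc (0:ℝ) 1, dist x (σ x y t) = t * dist x y := by
    intro x y t ht
    have := hgeo x y 0 h0mem t ht
    rw [h0] at this
    simpa [abs_of_nonneg ht.1] using this
  have hdist1 : ∀ x y : X, ∀ t ∈ Set.Icc (0:ℝ) 1,
      dist (σ x y t) y = (1 - t) * dist x y := by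
    intro x y t ht
    have := hgeo x y t ht 1 h1mem
    rw [h1] at this
    rwa [abs_of_nonneg (by linarith [ht.2])] at this
  -- L3: points of A are close to γ t
  have L3 : ∀ t ∈ Set.Icc (0:ℝ) 1, ∀ a ∈ A, infDist a (γ t) ≤ t * d := by
    intro t ht a ha
    refine le_of_forall_pos_le_add fun ε hε => ?_
    have hiab : infDist a B ≤ d := infDist_le_hausdorffDist_of_mem ha hfinAB
    obtain ⟨b, hb, hab⟩ := (infDist_lt_iff hBne).1 (lt_of_le_of_lt hiab (by linarith : d < d + ε))
    calc infDist a (γ t) ≤ dist a (σ a b t) := infDist_le_dist_of_mem (hmemγ t a ha b hb)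
      _ = t * dist a b := hdist0 a b t ht
      _ ≤ t * d + ε := by nlinarith [ht.1, ht.2, mul_le_mul_of_nonneg_left hab.le ht.1]
  -- L4: points of B are close to γ t
  have L4 : ∀ t ∈ Set.Icc (0:ℝ) 1, ∀ b ∈ B, infDist b (γ t) ≤ (1 - t) * d := by
    intro t ht b hb
    refine le_of_forall_pos_le_add fun ε hε => ?_
    have hiba : infDist b A ≤ d := by
      have := infDist_le_hausdorffDist_of_mem hb hfinBA
      rwa [hausdorffDist_comm] at this
    obtain ⟨a, ha, hba⟩ := (infDist_lt_iff hAne).1 (lt_of_le_of_lt hiba (by linarith : d < d + ε))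
    have : dist b (σ a b t) = (1 - t) * dist a b := by
      rw [dist_comm]; exact hdist1 a b t ht
    calc infDist b (γ t) ≤ dist b (σ a b t) := infDist_le_dist_of_mem (hmemγ t a ha b hb)
      _ = (1 - t) * dist a b := this
      _ ≤ (1 - t) * d + ε := by
          rw [dist_comm] at hba
          nlinarith [ht.1, ht.2, mul_le_mul_of_nonneg_left hba.le (by linarith [ht.2] : (0:ℝ) ≤ 1 - t)]
  -- L1 : γ t is close to A
  have L1 : ∀ t ∈ Set.Icc (0:ℝ) 1, ∀ x ∈ γ t, infDist x A ≤ t * d := by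
    intro t ht x hx
    refine le_of_forall_pos_le_add fun ε hε => ?_
    have hsub : γ t ⊆ {x | infDist x A ≤ t * (d + ε)} := by
      refine hγmin t _ (nbhd_isClosed A _) (nbhd_sigmaConvex σ h0 h1 hconvex hAne hAcv _) ?_
      intro a ha b hb
      have hiba : infDist b A ≤ d := by
        have := infDist_le_hausdorffDist_of_mem hb hfinBA
        rwa [hausdorffDist_comm] at this
      obtain ⟨a', ha', hba'⟩ := (infDist_lt_iff hAne).1 (lt_of_le_of_lt hiba (by linarith : d < d + ε))
      have hmem : σ a a' t ∈ A := hAcv a ha a' ha' t ht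
      have hdle := dist_sigma_le σ h0 h1 hconvex a b a a' ht
      simp only [dist_self] at hdle
      have h2 : infDist (σ a b t) A ≤ (1 - t) * 0 + t * dist b a' :=
        le_trans (infDist_le_dist_of_mem hmem) hdle
      simp only [Set.mem_setOf_eq]
      nlinarith [mul_le_mul_of_nonneg_left hba'.le ht.1]
    have := hsub hx
    simp only [Set.mem_setOf_eq] at this
    nlinarith [ht.1, ht.2]
  -- L2 : γ t is close to B
  have L2 : ∀ t ∈ Set.Icc (0:ℝ) 1, ∀ x ∈ γ t, infDist x B ≤ (1 - t) * d := by
    intro t ht x hx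
    refine le_of_forall_pos_le_add fun ε hε => ?_
    have hsub : γ t ⊆ {x | infDist x B ≤ (1 - t) * (d + ε)} := by
      refine hγmin t _ (nbhd_isClosed B _) (nbhd_sigmaConvex σ h0 h1 hconvex hBne hBcv _) ?_
      intro a ha b hb
      have hiab : infDist a B ≤ d := infDist_le_hausdorffDist_of_mem ha hfinAB
      obtain ⟨b', hb', hab'⟩ := (infDist_lt_iff hBne).1 (lt_of_le_of_lt hiab (by linarith : d < d + ε))
      have hmem : σ b' b t ∈ B := hBcv b' hb' b hb t ht
      have hdle := dist_sigma_le σ h0 h1 hconvex a b b' b ht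
      simp only [dist_self] at hdle
      have h2 : infDist (σ a b t) B ≤ (1 - t) * dist a b' + t * 0 :=
        le_trans (infDist_le_dist_of_mem hmem) hdle
      simp only [Set.mem_setOf_eq]
      nlinarith [mul_le_mul_of_nonneg_left hab'.le (by linarith [ht.2] : (0:ℝ) ≤ 1 - t)]
    have := hsub hx
    simp only [Set.mem_setOf_eq] at this
    nlinarith [ht.1, ht.2]
  -- boundedness of γ t
  have hγbd : ∀ t ∈ Set.Icc (0:ℝ) 1, Bornology.IsBounded (γ t) := by
    intro t ht
    obtain ⟨a0, ha0⟩ := id hAne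
    refine (Metric.isBounded_closedBall (x := a0) (r := d + 1 + Metric.diam A)).subset
      fun x hx => ?_
    have h2 : infDist x A ≤ d := le_trans (L1 t ht x hx) (by nlinarith [ht.1, ht.2])
    obtain ⟨a, ha, hxa⟩ := (infDist_lt_iff hAne).1 (lt_of_le_of_lt h2 (by linarith : d < d + 1))
    have h3 : dist a a0 ≤ Metric.diam A := Metric.dist_le_diam_of_mem hAbd ha ha0
    calc dist x a0 ≤ dist x a + dist a a0 := dist_triangle _ _ _
      _ ≤ d + 1 + Metric.diam A := by linarith
  -- L5
  have L5 : ∀ s ∈ Set.Icc (0:ℝ) 1, ∀ t ∈ Set.Icc (0:ℝ) 1, s ≤ t →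
      ∀ x ∈ γ s, infDist x (γ t) ≤ (t - s) * d := by
    intro s hs t ht hst x hx
    rcases eq_or_lt_of_le hst with rfl | hlt
    · simp [infDist_zero_of_mem hx]
    · have ht0 : 0 < t := lt_of_le_of_lt hs.1 hlt
      refine le_of_forall_pos_le_add fun ε hε => ?_
      have hsub : γ s ⊆ {x | infDist x (γ t) ≤ (t - s) * (d + ε)} := by
        refine hγmin s _ (nbhd_isClosed _ _)
          (nbhd_sigmaConvex σ h0 h1 hconvex (hγne t) (hγcv t) _) ?_
        intro a ha b hb
        set u := s / t with hu_def
        have hu : u ∈ Set.Icc (0:ℝ) 1 :=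
          ⟨div_nonneg hs.1 ht0.le, (div_le_one ht0).2 hst⟩
        have hut : u * t = s := div_mul_cancel₀ s ht0.ne'
        have hcons := hconsistent a b 0 h0mem t ⟨ht0.le, ht.2⟩ u hu ht0
        rw [h0] at hcons
        have harg : (1 - u) * 0 + u * t = s := by rw [hut]; ring
        rw [harg] at hcons
        have h3 : infDist a (γ t) ≤ t * d := L3 t ht a ha
        obtain ⟨c', hc', hac'⟩ := (infDist_lt_iff (hγne t)).1
          (lt_of_le_of_lt h3 (by nlinarith : t * d < t * (d + ε)))
        have hc : σ a b t ∈ γ t := hmemγ t a ha b hb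
        have hq : σ c' (σ a b t) u ∈ γ t := hγcv t c' hc' _ hc u hu
        have hdle := dist_sigma_le σ h0 h1 hconvex a (σ a b t) c' (σ a b t) hu
        rw [hcons] at hdle
        simp only [dist_self, mul_zero, add_zero] at hdle
        simp only [Set.mem_setOf_eq]
        have h4 : (1 - u) * dist a c' ≤ (1 - u) * (t * (d + ε)) :=
          mul_le_mul_of_nonneg_left hac'.le (by linarith [hu.2])
        have h5 : (1 - u) * (t * (d + ε)) = (t - u * t) * (d + ε) := by ring
        rw [hut] at h5
        calc infDist (σ a b s) (γ t) ≤ dist (σ a b s) (σ c' (σ a b t) u) :=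
              infDist_le_dist_of_mem hq
          _ ≤ (1 - u) * dist a c' := hdle
          _ ≤ (t - s) * (d + ε) := by linarith
      have := hsub hx
      simp only [Set.mem_setOf_eq] at this
      nlinarith [hs.1, ht.2]
  -- L6
  have L6 : ∀ s ∈ Set.Icc (0:ℝ) 1, ∀ t ∈ Set.Icc (0:ℝ) 1, s ≤ t →
      ∀ y ∈ γ t, infDist y (γ s) ≤ (t - s) * d := by
    intro s hs t ht hst y hy
    rcases eq_or_lt_of_le hst with rfl | hlt
    · simp [infDist_zero_of_mem hy]
    · have hs1 : s < 1 := lt_of_lt_of_le hlt ht.2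
      have h1s : (0:ℝ) < 1 - s := by linarith
      refine le_of_forall_pos_le_add fun ε hε => ?_
      have hsub : γ t ⊆ {y | infDist y (γ s) ≤ (t - s) * (d + ε)} := by
        refine hγmin t _ (nbhd_isClosed _ _)
          (nbhd_sigmaConvex σ h0 h1 hconvex (hγne s) (hγcv s) _) ?_
        intro a ha b hb
        set u := (t - s) / (1 - s) with hu_def
        have hu : u ∈ Set.Icc (0:ℝ) 1 :=
          ⟨div_nonneg (by linarith) h1s.le, (div_le_one h1s).2 (by linarith [ht.2])⟩
        have hus : u * (1 - s) = t - s := div_mul_cancel₀ _ h1s.ne'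
        have hcons := hconsistent a b s hs 1 h1mem u hu hs1
        rw [h1] at hcons
        have harg : (1 - u) * s + u * 1 = t := by nlinarith
        rw [harg] at hcons
        have h3 : infDist b (γ s) ≤ (1 - s) * d := L4 s hs b hb
        obtain ⟨c', hc', hbc'⟩ := (infDist_lt_iff (hγne s)).1
          (lt_of_le_of_lt h3 (by nlinarith : (1 - s) * d < (1 - s) * (d + ε)))
        have hc : σ a b s ∈ γ s := hmemγ s a ha b hb
        have hq : σ (σ a b s) c' u ∈ γ s := hγcv s _ hc c' hc' u hu
        have hdle := dist_sigma_le σ h0 h1 hconvex (σ a b s) b (σ a b s) c' hu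
        rw [hcons] at hdle
        simp only [dist_self, mul_zero, zero_add] at hdle
        simp only [Set.mem_setOf_eq]
        have h4 : u * dist b c' ≤ u * ((1 - s) * (d + ε)) :=
          mul_le_mul_of_nonneg_left hbc'.le hu.1
        have h5 : u * ((1 - s) * (d + ε)) = (u * (1 - s)) * (d + ε) := by ring
        rw [hus] at h5
        calc infDist (σ a b t) (γ s) ≤ dist (σ a b t) (σ (σ a b s) c' u) :=
              infDist_le_dist_of_mem hq
          _ ≤ u * dist b c' := hdle
          _ ≤ (t - s) * (d + ε) := by linarith
      have := hsub hy
      simp only [Set.mem_setOf_eq] at this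
      nlinarith [hs.1, ht.2]
  -- finiteness
  have hfinA : ∀ t ∈ Set.Icc (0:ℝ) 1, EMetric.hausdorffEdist A (γ t) ≠ ⊤ := fun t ht =>
    hausdorffEdist_ne_top_of_nonempty_of_bounded hAne (hγne t) hAbd (hγbd t ht)
  have hfinB : ∀ t ∈ Set.Icc (0:ℝ) 1, EMetric.hausdorffEdist (γ t) B ≠ ⊤ := fun t ht =>
    hausdorffEdist_ne_top_of_nonempty_of_bounded (hγne t) hBne (hγbd t ht) hBbd
  have hfinγ : ∀ s ∈ Set.Icc (0:ℝ) 1, ∀ t ∈ Set.Icc (0:ℝ) 1,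
      EMetric.hausdorffEdist (γ s) (γ t) ≠ ⊤ := fun s hs t ht =>
    hausdorffEdist_ne_top_of_nonempty_of_bounded (hγne s) (hγne t) (hγbd s hs) (hγbd t ht)
  -- main equality for s ≤ t
  have key : ∀ s ∈ Set.Icc (0:ℝ) 1, ∀ t ∈ Set.Icc (0:ℝ) 1, s ≤ t →
      Metric.hausdorffDist (γ s) (γ t) = (t - s) * d := by
    intro s hs t ht hst
    have hub : Metric.hausdorffDist (γ s) (γ t) ≤ (t - s) * d :=
      hausdorffDist_le_of_infDist (mul_nonneg (by linarith) hd0)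
        (L5 s hs t ht hst) (L6 s hs t ht hst)
    have hAs : Metric.hausdorffDist A (γ s) ≤ s * d :=
      hausdorffDist_le_of_infDist (mul_nonneg hs.1 hd0)
        (fun x hx => L3 s hs x hx) (fun x hx => L1 s hs x hx)
    have hBt : Metric.hausdorffDist (γ t) B ≤ (1 - t) * d :=
      hausdorffDist_le_of_infDist (mul_nonneg (by linarith [ht.2]) hd0)
        (fun x hx => L2 t ht x hx) (fun x hx => L4 t ht x hx)
    have htr1 : Metric.hausdorffDist A (γ t) ≤
        Metric.hausdorffDist A (γ s) + Metric.hausdorffDist (γ s) (γ t) :=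
      hausdorffDist_triangle (hfinA s hs)
    have htr2 : d ≤ Metric.hausdorffDist A (γ t) + Metric.hausdorffDist (γ t) B := by
      rw [hd]
      exact hausdorffDist_triangle (hfinA t ht)
    linarith
  refine ⟨hγ0, hγ1, fun s hs t ht => ?_⟩
  rcases le_total s t with h | h
  · rw [abs_of_nonneg (by linarith : (0:ℝ) ≤ t - s)]
    exact key s hs t ht h
  · rw [abs_of_nonpos (by linarith : t - s ≤ 0), hausdorffDist_comm,
      show -(t - s) = s - t by ring]
    exact key t ht s hs h
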